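/- arXiv:1109.2539 — 3 statements merged into one kernel-verified Lean document; each statement's English description precedes it below -/
import Mathlib

section
/- Define p_{k,N}(a,b,c) = C_N(a,b,c) · (2a)_k (a+1)_k (a+b)_k (a+c)_k (-N)_k / [k! (a)_k (a-b+1)_k (a-c+1)_k (2a+N+1)_k], where C_N(a,b,c) = (a-b+1)_N (a-c+1)_N / [(2a+1)_N (-b-c+1)_N]. Then for all integers 0 ≤ j ≤ k ≤ N and reals a,b,c,δ for which all expressions are defined, p_{j,k}(a,b,a+k+2δ) · p_{k,N}(a+δ,b+δ,c) = p_{j,N}(a,b,c+δ) · p_{k-j,N-j}(a+j+δ, -a-j+δ, c). -/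
/-- Pochhammer symbol `(a)_k = a(a+1)⋯(a+k-1)`. -/
noncomputable def poch (a : ℝ) (k : ℕ) : ℝ := ∏ i ∈ Finset.range k, (a + i)

/-- Normalizing constant `C_N(a,b,c)` of Wilson's 6-j weights. -/
noncomputable def wC (N : ℕ) (a b c : ℝ) : ℝ :=
  poch (a - b + 1) N * poch (a - c + 1) N / (poch (2*a + 1) N * poch (-b - c + 1) N)

/-- Wilson's 6-j weight `p_{k,N}(a,b,c)`. -/
noncomputable def wp (k N : ℕ) (a b c : ℝ) : ℝ :=
  wC N a b c *
    (poch (2*a) k * poch (a + 1) k * poch (a + b) k * poch (a + c) k * poch (-(N : ℝ)) k /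
      ((k.factorial : ℝ) * poch a k * poch (a - b + 1) k * poch (a - c + 1) k *
        poch (2*a + N + 1) k))

/-- The product of all Pochhammer factors appearing in denominators of `wp k N a b c`. -/
noncomputable def wpden (k N : ℕ) (a b c : ℝ) : ℝ :=
  poch (2*a + 1) N * poch (-b - c + 1) N * poch a k * poch (a - b + 1) k *
    poch (a - c + 1) k * poch (2*a + N + 1) k

/-!
Write k = j + m and N = j + m + q and clear denominators: the identity becomes an equality
between two products of Pochhammer symbols. These split into families sharing a base point, and
within each family both sides are one long Pochhammer symbol cut at different places, by
(x)_(m+n) = (x)_m (x+m)_n. The only other inputs are the duplication relation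
(2x)_(2n) (x+1)_n = (2x+1)_(2n) (x)_n and the reflection (1-x-n)_n = (-1)^n (x)_n, whose signs
cancel between the factors carrying δ and the factors at the negative integers -k and -N.
-/

open scoped Nat

lemma poch_succ (x : ℝ) (n : ℕ) : poch x (n + 1) = poch x n * (x + n) :=
  Finset.prod_range_succ _ _

lemma poch_add (x : ℝ) (m n : ℕ) : poch x (m + n) = poch x m * poch (x + m) n := by
  simp only [poch, Finset.prod_range_add, Nat.cast_add, add_assoc]

lemma poch_eq_ascPochhammer_eval (x : ℝ) (n : ℕ) : poch x n = (ascPochhammer ℝ n).eval x := by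
  induction n with
  | zero => simp [poch]
  | succ n ih => rw [poch_succ, ascPochhammer_succ_eval, ih]

lemma poch_one (n : ℕ) : poch 1 n = n ! := by
  rw [poch_eq_ascPochhammer_eval, ascPochhammer_eval_one]

lemma poch_neg (x : ℝ) (n : ℕ) : poch (-x) n = (-1) ^ n * poch (x - n + 1) n := by
  simp only [poch_eq_ascPochhammer_eval, ascPochhammer_eval_neg_eq_descPochhammer,
    descPochhammer_eval_eq_ascPochhammer]

lemma poch_eq_neg_one_pow_mul_poch {x y : ℝ} {n : ℕ} (h : x + y + n = 1) :
    poch x n = (-1) ^ n * poch y n := by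
  rw [show x = -(y + n - 1) by linarith, poch_neg]
  ring_nf

lemma poch_two_mul_mul_poch_add_one (x : ℝ) (n : ℕ) :
    poch (2 * x) (2 * n) * poch (x + 1) n = poch (2 * x + 1) (2 * n) * poch x n := by
  induction n with
  | zero => simp [poch]
  | succ n ih =>
    rw [show 2 * (n + 1) = 2 * n + 1 + 1 by ring]
    simp only [poch_succ]
    linear_combination (norm := (push_cast; ring_nf))
      ((x + n + 1) * (2 * x + 2 * n) * (2 * x + 2 * n + 1)) * ih

lemma poch_add_mul_poch_add (x : ℝ) (j m q : ℕ) :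
    poch x (j + (m + q)) * poch (x + j) m = poch x (j + m) * poch (x + j) (m + q) := by
  rw [poch_add x j, poch_add x j]
  ring

lemma poch_add_mul_poch_two_mul_add (y : ℝ) (j m q : ℕ) :
    poch y (j + m + q) * poch (y + (j + m + q : ℕ)) j * poch (y + 2 * j) m =
      poch y (j + m) * poch (y + (j + m : ℕ)) j * poch (y + 2 * j) (m + q) := by
  rw [← poch_add, ← poch_add, show j + m + q + j = 2 * j + (m + q) by ring,
    show j + m + j = 2 * j + m by ring, poch_add y (2 * j), poch_add y (2 * j)]
  push_cast
  ring

lemma poch_duplication_block (v : ℝ) (j m q : ℕ) :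
    poch (2 * v) (j + m) * poch (2 * v + (j + m : ℕ)) j * poch (v + 1) (j + m) *
        poch (2 * v + 2 * j + 1) (m + q) * poch (v + j) m *
        poch (2 * v + 2 * j + 1 + (m + q : ℕ)) m =
      poch (2 * v + 1) (j + m + q) * poch (2 * v + 1 + (j + m + q : ℕ)) (j + m) * poch v (j + m) *
        poch (2 * v + 2 * j) m * poch (v + j + 1) m := by
  rw [← poch_add, ← poch_add, show j + m + j = 2 * j + m by ring,
    show j + m + q + (j + m) = 2 * j + (m + q) + m by ring, poch_add (2 * v) (2 * j),
    poch_add (2 * v + 1) (2 * j + (m + q)), poch_add (2 * v + 1) (2 * j), poch_add (v + 1) j,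
    poch_add v j]
  push_cast
  linear_combination (norm := ring_nf)
    (poch (2 * v + 2 * j) m * poch (v + j + 1) m * poch (2 * v + 2 * j + 1) (m + q) *
      poch (v + j) m * poch (2 * v + 2 * j + 1 + (m + q)) m) * poch_two_mul_mul_poch_add_one v j

lemma poch_reflection_block (u w : ℝ) (j m : ℕ) :
    poch (1 - (j + m) - u) (j + m) * poch w (j + m) * poch (-(j + m)) j * m ! =
      poch u m * poch (1 - w - (j + m)) (j + m) * poch (1 - (j + m) - u) j * (j + m)! := by
  have hu :
      poch (1 - (j + m) - u) (j + m) = poch (1 - (j + m) - u) j * ((-1) ^ m * poch u m) := by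
    rw [poch_add, poch_eq_neg_one_pow_mul_poch (x := 1 - (j + m) - u + j) (y := u) (by ring)]
  have hw : poch (1 - w - (j + m)) (j + m) = (-1) ^ (j + m) * poch w (j + m) :=
    poch_eq_neg_one_pow_mul_poch (by push_cast; ring)
  have hk : poch (-(j + m)) j = (-1) ^ j * poch (m + 1) j :=
    poch_eq_neg_one_pow_mul_poch (by ring)
  have hfact : ((j + m)! : ℝ) = m ! * poch (m + 1) j := by
    rw [← poch_one, add_comm, poch_add, poch_one, add_comm (1 : ℝ)]
  rw [hu, hw, hk, hfact]
  ring

noncomputable def wpnum (k N : ℕ) (a b c : ℝ) : ℝ :=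
  poch (a - b + 1) N * poch (a - c + 1) N *
    (poch (2 * a) k * poch (a + 1) k * poch (a + b) k * poch (a + c) k * poch (-(N : ℝ)) k)

lemma wp_eq_div (k N : ℕ) (a b c : ℝ) :
    wp k N a b c = wpnum k N a b c / (k ! * wpden k N a b c) := by
  rw [wp, wC, div_mul_div_comm, wpnum, wpden]
  ring

lemma factorial_mul_wpden_ne_zero {k N : ℕ} {a b c : ℝ} (h : wpden k N a b c ≠ 0) :
    (k ! : ℝ) * wpden k N a b c ≠ 0 :=
  mul_ne_zero (Nat.cast_ne_zero.mpr k.factorial_ne_zero) h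

theorem wilson_product_identity (j k N : ℕ) (a b c δ : ℝ)
    (hjk : j ≤ k) (hkN : k ≤ N)
    (h1 : wpden j k a b (a + k + 2*δ) ≠ 0)
    (h2 : wpden k N (a + δ) (b + δ) c ≠ 0)
    (h3 : wpden j N a b (c + δ) ≠ 0)
    (h4 : wpden (k - j) (N - j) (a + j + δ) (-a - j + δ) c ≠ 0) :
    wp j k a b (a + k + 2*δ) * wp k N (a + δ) (b + δ) c
      = wp j N a b (c + δ) * wp (k - j) (N - j) (a + j + δ) (-a - j + δ) c := by
  obtain ⟨m, rfl⟩ := Nat.exists_eq_add_of_le hjk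
  obtain ⟨q, rfl⟩ := Nat.exists_eq_add_of_le hkN
  rw [show j + m + q - j = m + q by omega, Nat.add_sub_cancel_left] at h4 ⊢
  rw [wp_eq_div, wp_eq_div, wp_eq_div, wp_eq_div, div_mul_div_comm, div_mul_div_comm,
    div_eq_div_iff
      (mul_ne_zero (factorial_mul_wpden_ne_zero h1) (factorial_mul_wpden_ne_zero h2))
      (mul_ne_zero (factorial_mul_wpden_ne_zero h3) (factorial_mul_wpden_ne_zero h4))]
  -- one factor per family of Pochhammer symbols; the coefficient below collects the rest,
  -- which occur identically on both sides
  have families := congr($(poch_add_mul_poch_add (a + δ - c + 1) j m q) *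
    $((poch_add (a - c - δ + 1) j (m + q)).symm) * $(poch_add (a + δ + c) j m) *
    $(poch_add_mul_poch_two_mul_add (2 * a + 1) j m q) * $(poch_duplication_block (a + δ) j m q) *
    $(poch_reflection_block (2 * δ) (a + b + 2 * δ) j m) * $(poch_add (-(j + m + q : ℝ)) j m))
  simp only [wpnum, wpden]
  linear_combination (norm := (push_cast; ring_nf))
    (poch (a - b + 1) (j + m) * poch (a - b + 1) (j + m + q) * poch (2 * a) j * poch (a + 1) j *
      poch (a + b) j * poch a j * poch (a - b + 1) j * poch (-b - c - δ + 1) (j + m + q) * j !) *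
    families
end

section
/- Under the admissibility conditions a > -1/2, -a < b < a+1, and (c > a+N or c < -a-N+1), the weights p_{k,N}(a,b,c) are nonnegative for all 0 ≤ k ≤ N; in particular ν = Σ_{k=0}^N p_{k,N}(a,b,c) δ_k is a probability measure on {0,...,N} (given that the weights sum to 1). -/
/-!
Each Pochhammer factor of `p_{k,N}(a,b,c)` is either a product of positive numbers or has a
partner of the same sign: when `a < 0` the leading factors of `(2a)_k` and `(a)_k` are both
negative, and the negative factors of `(-N)_k` are matched by those of `(a-c+1)_k` (for
`c > a+N`) or `(a+c)_k` (for `c < -a-N+1`), while `(a-c+1)_N` and `(-b-c+1)_N` have the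
same sign in both regimes.
-/

lemma poch_pos {x : ℝ} {k : ℕ} (h : ∀ i < k, 0 < x + i) : 0 < poch x k :=
  Finset.prod_pos fun i hi => h i (Finset.mem_range.mp hi)

lemma poch_pos_of_pos {x : ℝ} (hx : 0 < x) (k : ℕ) : 0 < poch x k :=
  poch_pos fun i _ => add_pos_of_pos_of_nonneg hx i.cast_nonneg

lemma poch_mul_poch_nonneg {x y : ℝ} {k : ℕ} (h : ∀ i < k, 0 ≤ (x + i) * (y + i)) :
    0 ≤ poch x k * poch y k := by
  rw [poch, poch, ← Finset.prod_mul_distrib]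
  exact Finset.prod_nonneg fun i hi => h i (Finset.mem_range.mp hi)

lemma poch_mul_poch_nonneg_of_add_le_one {x y : ℝ} {k : ℕ} (hx : x + k ≤ 1)
    (hy : y + k ≤ 1) :
    0 ≤ poch x k * poch y k := by
  refine poch_mul_poch_nonneg fun i hi => mul_nonneg_of_nonpos_of_nonpos ?_ ?_
  all_goals
    have : (i : ℝ) + 1 ≤ k := by exact_mod_cast hi
    linarith

lemma poch_two_mul_mul_poch_nonneg {a : ℝ} (ha : -1/2 ≤ a) (k : ℕ) :
    0 ≤ poch (2 * a) k * poch a k := by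
  refine poch_mul_poch_nonneg fun i _ => ?_
  rcases i.eq_zero_or_pos with rfl | hi
  · simp only [Nat.cast_zero, add_zero]
    nlinarith [sq_nonneg a]
  · have : (1 : ℝ) ≤ i := by exact_mod_cast hi
    nlinarith

lemma div_nonneg_of_mul_nonneg {x y : ℝ} (h : 0 ≤ x * y) : 0 ≤ x / y :=
  div_nonneg_iff.mpr (mul_nonneg_iff.mp h)

lemma wp_eq_mul (k N : ℕ) (a b c : ℝ) :
    wp k N a b c =
      poch (a - b + 1) N / poch (2 * a + 1) N * (poch (a - c + 1) N / poch (-b - c + 1) N) *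
        (poch (2 * a) k / poch a k) *
        (poch (a + 1) k * poch (a + b) k /
          (k.factorial * poch (a - b + 1) k * poch (2 * a + N + 1) k)) *
        (poch (a + c) k * poch (-(N : ℝ)) k / poch (a - c + 1) k) := by
  unfold wp wC
  ring

lemma wp_c_factors_nonneg {k N : ℕ} {a b c : ℝ} (hb1 : -a < b) (hb2 : b < a + 1)
    (hc : a + N < c ∨ c < -a - N + 1) (hk : k ≤ N) :
    0 ≤ poch (a - c + 1) N / poch (-b - c + 1) N ∧
      0 ≤ poch (a + c) k * poch (-(N : ℝ)) k / poch (a - c + 1) k := by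
  have hkN : (k : ℝ) ≤ N := by exact_mod_cast hk
  rcases hc with hc | hc
  · have hapc : 0 < poch (a + c) k := poch_pos fun i hi => by
      have : (i : ℝ) + 1 ≤ N := by exact_mod_cast hi.trans_le hk
      linarith
    refine ⟨div_nonneg_of_mul_nonneg
      (poch_mul_poch_nonneg_of_add_le_one (by linarith) (by linarith)), ?_⟩
    rw [mul_div_assoc]
    exact mul_nonneg hapc.le (div_nonneg_of_mul_nonneg
      (poch_mul_poch_nonneg_of_add_le_one (by linarith) (by linarith)))
  · have hac : ∀ i < N, 0 < a - c + 1 + i := fun i hi => by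
      have : (i : ℝ) + 1 ≤ N := by exact_mod_cast hi
      linarith
    have hbc : 0 < poch (-b - c + 1) N := poch_pos fun i hi => by
      have : (i : ℝ) + 1 ≤ N := by exact_mod_cast hi
      linarith
    exact ⟨div_nonneg (poch_pos hac).le hbc.le,
      div_nonneg (poch_mul_poch_nonneg_of_add_le_one (by linarith) (by linarith))
        (poch_pos fun i hi => hac i (hi.trans_le hk)).le⟩

theorem wp_nonneg {k N : ℕ} {a b c : ℝ} (hb1 : -a < b) (hb2 : b < a + 1)
    (hc : a + N < c ∨ c < -a - N + 1) (hk : k ≤ N) : 0 ≤ wp k N a b c := by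
  obtain ⟨hcN, hck⟩ := wp_c_factors_nonneg hb1 hb2 hc hk
  have h2a : 0 ≤ poch (2 * a) k / poch a k :=
    div_nonneg_of_mul_nonneg (poch_two_mul_mul_poch_nonneg (by linarith) k)
  have habN : 0 < poch (a - b + 1) N := poch_pos_of_pos (by linarith) N
  have habk : 0 < poch (a - b + 1) k := poch_pos_of_pos (by linarith) k
  have h2a1 : 0 < poch (2 * a + 1) N := poch_pos_of_pos (by linarith) N
  have ha1 : 0 < poch (a + 1) k := poch_pos_of_pos (by linarith) k
  have hapb : 0 < poch (a + b) k := poch_pos_of_pos (by linarith) k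
  have h2aN1 : 0 < poch (2 * a + N + 1) k := poch_pos_of_pos (by linarith) k
  rw [wp_eq_mul]
  refine mul_nonneg (mul_nonneg (mul_nonneg (mul_nonneg ?_ hcN) h2a) ?_) hck
  · exact div_nonneg habN.le h2a1.le
  · positivity

theorem wilson_weights_probability_general (N : ℕ) (a b c : ℝ)
    (hb1 : -a < b) (hb2 : b < a + 1)
    (hc : c > a + N ∨ c < -a - N + 1)
    (hsum : ∑ k ∈ Finset.range (N + 1), wp k N a b c = 1) :
    (∀ k ≤ N, 0 ≤ wp k N a b c) ∧
      ∑ k ∈ Finset.range (N + 1), wp k N a b c = 1 :=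
  ⟨fun _ hk => wp_nonneg hb1 hb2 hc hk, hsum⟩

theorem wilson_weights_probability (N : ℕ) (a b c : ℝ) (hN : 1 ≤ N)
    (ha : a > -1/2) (hb1 : -a < b) (hb2 : b < a + 1)
    (hc : c > a + N ∨ c < -a - N + 1)
    (hsum : ∑ k ∈ Finset.range (N + 1), wp k N a b c = 1) :
    (∀ k ≤ N, 0 ≤ wp k N a b c) ∧
      ∑ k ∈ Finset.range (N + 1), wp k N a b c = 1 :=
  wilson_weights_probability_general N a b c hb1 hb2 hc hsum
end

section
/- For the weights π and p defined from Pochhammer symbols, the identity π_{j,K}(a,b) π_{k-j,K-j}(a+δ+2j, δ) = π_{k,K}(a+δ, b+δ) · p_{j,k}(a/2, b-a/2, a/2+δ+k) holds for all 0 ≤ j ≤ k ≤ K and admissible real a, b, δ. -/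
/-- The weights `π_{j,K}(a,b)`. -/
noncomputable def piw (j K : ℕ) (a b : ℝ) : ℝ :=
  (K.choose j : ℝ) * (poch (a - b + j + 1) (K - j) / poch (a + 2*j + 1) (K - j)) *
    (poch b j / poch (a + j) j)

/-- Product of the Pochhammer factors in the denominator of `piw j K a b`. -/
noncomputable def piwden (j K : ℕ) (a b : ℝ) : ℝ :=
  poch (a + 2*j + 1) (K - j) * poch (a + j) j

/-!
Write `k = j + m` and `K = k + n`. Splitting Pochhammer symbols by `(x)_(m+n) = (x)_m (x+m)_n`,
reflecting them by `(1-x-n)_n = (-1)^n (x)_n`, and using the duplication-type identity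
`(2x+1)_(2j) (x)_j = (2x)_(2j) (x+1)_j`, the weight `p_{j,k}(a/2, b-a/2, a/2+δ+k)` collapses to
`C(k,j) (a-b+j+1)_m (δ)_m (b)_j (a+δ+k)_j / ((b+δ)_k (a+j)_j (a+2j+1)_m)`.
With `C(K,j) C(K-j,m) = C(K,k) C(k,j)` both sides become the same product of Pochhammer symbols.
-/

open scoped Nat

lemma poch_one_sub_sub (x : ℝ) (n : ℕ) : poch (1 - x - n) n = (-1) ^ n * poch x n := by
  rw [poch, poch, ← Finset.prod_range_reflect, ← Finset.card_range n, ← Finset.prod_const,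
    Finset.card_range, ← Finset.prod_mul_distrib]
  refine Finset.prod_congr rfl fun i hi => ?_
  rw [Finset.mem_range] at hi
  rw [Nat.cast_sub (by omega), Nat.cast_sub (by omega)]
  push_cast
  ring

lemma poch_natCast_add_one (m j : ℕ) : poch (m + 1) j = (m + j)! / m ! := by
  rw [eq_div_iff (by positivity), ← Nat.factorial_mul_ascFactorial,
    Nat.ascFactorial_eq_prod_range]
  push_cast [poch]
  ring

lemma poch_neg_natCast_add (j m : ℕ) :
    poch (-((j + m : ℕ) : ℝ)) j = (-1) ^ j * (j + m)! / m ! := by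
  rw [show -((j + m : ℕ) : ℝ) = 1 - (m + 1 : ℝ) - j by push_cast; ring, poch_one_sub_sub,
    poch_natCast_add_one, add_comm m, mul_div_assoc]

lemma poch_two_mul_add_one_mul (x : ℝ) (j : ℕ) :
    poch (2 * x + 1) (2 * j) * poch x j = poch (2 * x) (2 * j) * poch (x + 1) j := by
  induction j with
  | zero => simp [poch]
  | succ j ih =>
    rw [show 2 * (j + 1) = 2 * j + 1 + 1 by ring]
    simp only [poch_succ]
    push_cast
    linear_combination (2 * x + 2 * j + 1) * (2 * x + 2 * j + 2) * (x + j) * ih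

lemma wp_add_eq (j m : ℕ) (A B C : ℝ) (h : wpden j (j + m) A B C ≠ 0) :
    wp j (j + m) A B C = (-1) ^ j * ((j + m).choose j : ℝ) * poch (A - B + j + 1) m *
      poch (A - C + j + 1) m * poch (A + B) j * poch (A + C) j /
      (poch (-B - C + 1) (j + m) * poch (2 * A + j) j * poch (2 * A + 2 * j + 1) m) := by
  simp only [wpden, mul_ne_zero_iff] at h
  obtain ⟨⟨⟨⟨⟨hN, hBC⟩, hA⟩, hAB⟩, hAC⟩, hNj⟩ := h
  have hshift : poch (2 * A + 1) (j + m) * poch (2 * A + (j + m : ℕ) + 1) j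
      = poch (2 * A + 1) (2 * j) * poch (2 * A + 2 * j + 1) m := by
    rw [show 2 * A + ((j + m : ℕ) : ℝ) + 1 = 2 * A + 1 + ((j + m : ℕ) : ℝ) by ring, ← poch_add,
      show j + m + j = 2 * j + m by ring, poch_add]
    push_cast
    ring_nf
  have hdup : poch (2 * A) j * poch (A + 1) j * poch (2 * A + j) j
      = poch (2 * A + 1) (2 * j) * poch A j := by
    rw [poch_two_mul_add_one_mul, two_mul j, poch_add]
    ring
  obtain ⟨h2j, h2jm⟩ := mul_ne_zero_iff.mp (hshift ▸ mul_ne_zero hN hNj)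
  have hdup_ne : poch (2 * A) j * poch (A + 1) j * poch (2 * A + j) j ≠ 0 :=
    hdup ▸ mul_ne_zero h2j hA
  simp only [mul_ne_zero_iff] at hdup_ne
  obtain ⟨⟨h2A, hA1⟩, h2Aj⟩ := hdup_ne
  rw [wp, wC, eq_div_of_mul_eq h2j ((mul_comm _ _).trans hdup.symm),
    eq_div_of_mul_eq hN ((mul_comm _ _).trans hshift), poch_neg_natCast_add, Nat.cast_add_choose,
    poch_add (A - B + 1), poch_add (A - C + 1)]
  -- `field_simp` works up to `ring_nf`-normal Pochhammer arguments; normalize the hypotheses alike.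
  ring_nf at hBC h2jm h2j hN h2A hA1 hAB hAC h2Aj ⊢
  field_simp

lemma wp_half_add_eq (j m : ℕ) (a b δ : ℝ)
    (h : wpden j (j + m) (a / 2) (b - a / 2) (a / 2 + δ + (j + m : ℕ)) ≠ 0) :
    wp j (j + m) (a / 2) (b - a / 2) (a / 2 + δ + (j + m : ℕ)) =
      ((j + m).choose j : ℝ) * poch (a - b + j + 1) m * poch δ m * poch b j *
        poch (a + δ + (j + m : ℕ)) j /
      (poch (b + δ) (j + m) * poch (a + j) j * poch (a + 2 * j + 1) m) := by
  rw [wp_add_eq j m _ _ _ h,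
    show a / 2 - (a / 2 + δ + (j + m : ℕ)) + j + 1 = 1 - δ - m by push_cast; ring,
    show -(b - a / 2) - (a / 2 + δ + (j + m : ℕ)) + 1 = 1 - (b + δ) - (j + m : ℕ) by ring,
    poch_one_sub_sub, poch_one_sub_sub, pow_add]
  field_simp
  ring_nf

lemma poch_add_ne_zero_of_wpden_ne_zero (j m : ℕ) (a b δ : ℝ)
    (h : wpden j (j + m) (a / 2) (b - a / 2) (a / 2 + δ + (j + m : ℕ)) ≠ 0) :
    poch (b + δ) (j + m) ≠ 0 := by
  simp only [wpden, mul_ne_zero_iff] at h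
  rw [show -(b - a / 2) - (a / 2 + δ + (j + m : ℕ)) + 1 = 1 - (b + δ) - (j + m : ℕ) by ring,
    poch_one_sub_sub] at h
  exact right_ne_zero_of_mul h.1.1.1.1.2

lemma cast_choose_eq_choose_mul_choose_div (j m n : ℕ) :
    ((j + m + n).choose j : ℝ) =
      (j + m + n).choose (j + m) * (j + m).choose j / (m + n).choose m := by
  have h := Nat.choose_mul (n := j + m + n) (Nat.le_add_right j m)
  rw [show j + m + n - j = m + n by omega, Nat.add_sub_cancel_left] at h
  exact eq_div_of_mul_eq (Nat.cast_ne_zero.mpr (Nat.choose_pos (Nat.le_add_right m n)).ne')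
    (by exact_mod_cast h.symm)

theorem piw_product_identity_general (j k K : ℕ) (a b δ : ℝ)
    (hjk : j ≤ k) (hkK : k ≤ K)
    (h1 : piwden j K a b ≠ 0)
    (h3 : piwden k K (a + δ) (b + δ) ≠ 0)
    (h4 : wpden j k (a/2) (b - a/2) (a/2 + δ + k) ≠ 0) :
    piw j K a b * piw (k - j) (K - j) (a + δ + 2*j) δ
      = piw k K (a + δ) (b + δ) * wp j k (a/2) (b - a/2) (a/2 + δ + k) := by
  obtain ⟨m, rfl⟩ := Nat.exists_eq_add_of_le hjk
  obtain ⟨n, rfl⟩ := Nat.exists_eq_add_of_le hkK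
  have hbδ := poch_add_ne_zero_of_wpden_ne_zero j m a b δ h4
  have hmn : ((m + n).choose m : ℝ) ≠ 0 :=
    Nat.cast_ne_zero.mpr (Nat.choose_pos (Nat.le_add_right m n)).ne'
  simp only [piw, piwden, show j + m + n - j = m + n by omega, Nat.add_sub_cancel_left] at h1 h3 ⊢
  rw [wp_half_add_eq j m a b δ h4, cast_choose_eq_choose_mul_choose_div, poch_add (a - b + j + 1)]
  rw [poch_add (a + 2 * j + 1)] at h1 ⊢
  rw [poch_add (a + δ + (j + m : ℕ)) j m] at h3 ⊢
  simp only [mul_ne_zero_iff] at h1 h3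
  obtain ⟨⟨h1m, h1n⟩, h1j⟩ := h1
  obtain ⟨h3n, h3j, h3m⟩ := h3
  push_cast at h3n h3j h3m ⊢
  ring_nf at h1m h1n h1j h3n h3j h3m hbδ ⊢
  field_simp

theorem piw_product_identity (j k K : ℕ) (a b δ : ℝ)
    (hjk : j ≤ k) (hkK : k ≤ K)
    (h1 : piwden j K a b ≠ 0)
    (h2 : piwden (k - j) (K - j) (a + δ + 2*j) δ ≠ 0)
    (h3 : piwden k K (a + δ) (b + δ) ≠ 0)
    (h4 : wpden j k (a/2) (b - a/2) (a/2 + δ + k) ≠ 0) :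
    piw j K a b * piw (k - j) (K - j) (a + δ + 2*j) δ
      = piw k K (a + δ) (b + δ) * wp j k (a/2) (b - a/2) (a/2 + δ + k) :=
  piw_product_identity_general j k K a b δ hjk hkK h1 h3 h4
end
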